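/- Completeness of MQC with respect to IK-CPS models (usual formulation): if in every IK-CPS model and every world w, w ⊩ Γ implies w ⊩ A, then there exists a proof term p such that Γ ⊢ p : A in MQC. -/

import Mathlib

/-- First-order formulas of minimal predicate logic (MQC), with atomic
formulas drawn from `Atm` and quantification encoded via functions from
individual terms `Trm` (weak HOAS). -/
inductive Fml (Atm Trm : Type) : Type where
  | atom : Atm → Fml Atm Trm
  | and : Fml Atm Trm → Fml Atm Trm → Fml Atm Trm
  | or : Fml Atm Trm → Fml Atm Trm → Fml Atm Trm
  | imp : Fml Atm Trm → Fml Atm Trm → Fml Atm Trm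
  | all : (Trm → Fml Atm Trm) → Fml Atm Trm
  | ex : (Trm → Fml Atm Trm) → Fml Atm Trm

/-- An Intuitionistic Kripke-CPS model. -/
structure IKCPS (Atm Trm : Type) where
  W : Type
  le : W → W → Prop
  le_refl : ∀ w, le w w
  le_trans : ∀ {a b c}, le a b → le b c → le a c
  /-- binary exploding relation between worlds and formulas -/
  explode : W → Fml Atm Trm → Prop
  /-- strong forcing of atomic formulas -/
  satom : W → Atm → Prop
  satom_mono : ∀ {w w' X}, le w w' → satom w X → satom w' X
  Dom : W → Set Trm
  Dom_mono : ∀ {w w'}, le w w' → Dom w ⊆ Dom w'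

namespace IKCPS

variable {Atm Trm : Type}

/-- The continuation ("forcing") monad over a predicate `S` of strong forcing:
`w ⊩ A` iff for all formulas `C`, for all `w' ≥ w`,
`(∀ w'' ≥ w', w'' ⊩ₛ A → w'' ⊩_E C) → w' ⊩_E C`. -/
def fa (M : IKCPS Atm Trm) (S : M.W → Prop) (w : M.W) : Prop :=
  ∀ C : Fml Atm Trm, ∀ w', M.le w w' →
    (∀ w'', M.le w' w'' → S w'' → M.explode w'' C) → M.explode w' C

/-- Strong forcing, extended from atomic to composite formulas. -/
def sforces (M : IKCPS Atm Trm) : Fml Atm Trm → M.W → Prop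
  | .atom X => fun w => M.satom w X
  | .and A B => fun w => M.fa (M.sforces A) w ∧ M.fa (M.sforces B) w
  | .or A B => fun w => M.fa (M.sforces A) w ∨ M.fa (M.sforces B) w
  | .imp A B => fun w => ∀ w', M.le w w' → M.fa (M.sforces A) w' → M.fa (M.sforces B) w'
  | .all A => fun w => ∀ w', M.le w w' → ∀ t ∈ M.Dom w', M.fa (M.sforces (A t)) w'
  | .ex A => fun w => ∃ t ∈ M.Dom w, M.fa (M.sforces (A t)) w

/-- (Non-strong) forcing. -/
def forces (M : IKCPS Atm Trm) (A : Fml Atm Trm) (w : M.W) : Prop :=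
  M.fa (M.sforces A) w

end IKCPS

/-- Natural deduction for minimal intuitionistic predicate logic (MQC).
`Deriv Γ A` states that there is a proof term `p` with `Γ ⊢ p : A`. -/
inductive Deriv {Atm Trm : Type} : List (Fml Atm Trm) → Fml Atm Trm → Prop where
  | ax {Γ A} : A ∈ Γ → Deriv Γ A
  | andI {Γ A B} : Deriv Γ A → Deriv Γ B → Deriv Γ (.and A B)
  | andE1 {Γ A B} : Deriv Γ (.and A B) → Deriv Γ A
  | andE2 {Γ A B} : Deriv Γ (.and A B) → Deriv Γ B
  | orI1 {Γ A B} : Deriv Γ A → Deriv Γ (.or A B)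
  | orI2 {Γ A B} : Deriv Γ B → Deriv Γ (.or A B)
  | orE {Γ A B C} : Deriv Γ (.or A B) → Deriv (A :: Γ) C → Deriv (B :: Γ) C → Deriv Γ C
  | impI {Γ A B} : Deriv (A :: Γ) B → Deriv Γ (.imp A B)
  | impE {Γ A B} : Deriv Γ (.imp A B) → Deriv Γ A → Deriv Γ B
  | allI {Γ A} : (∀ t, Deriv Γ (A t)) → Deriv Γ (.all A)
  | allE {Γ A} (t : Trm) : Deriv Γ (.all A) → Deriv Γ (A t)
  | exI {Γ A} (t : Trm) : Deriv Γ (A t) → Deriv Γ (.ex A)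
  | exE {Γ A C} : Deriv Γ (.ex A) → (∀ t, Deriv (A t :: Γ) C) → Deriv Γ C

/-- Normal (`b = true`) and neutral (`b = false`) natural deduction derivations,
defined simultaneously.  `NND true Γ A` means there is a proof term in normal
form `r` with `Γ ⊢ r : A`; `NND false Γ A` means there is a neutral proof term
`e` with `Γ ⊢ e : A`. -/
inductive NND {Atm Trm : Type} : Bool → List (Fml Atm Trm) → Fml Atm Trm → Prop where
  | ne {Γ A} : NND false Γ A → NND true Γ A
  | ax {Γ A} : A ∈ Γ → NND false Γ A
  | andI {Γ A B} : NND true Γ A → NND true Γ B → NND true Γ (.and A B)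
  | andE1 {Γ A B} : NND false Γ (.and A B) → NND false Γ A
  | andE2 {Γ A B} : NND false Γ (.and A B) → NND false Γ B
  | orI1 {Γ A B} : NND true Γ A → NND true Γ (.or A B)
  | orI2 {Γ A B} : NND true Γ B → NND true Γ (.or A B)
  | orE {Γ A B C} : NND false Γ (.or A B) → NND true (A :: Γ) C → NND true (B :: Γ) C →
      NND false Γ C
  | impI {Γ A B} : NND true (A :: Γ) B → NND true Γ (.imp A B)
  | impE {Γ A B} : NND false Γ (.imp A B) → NND true Γ A → NND false Γ B
  | allI {Γ A} : (∀ t, NND true Γ (A t)) → NND true Γ (.all A)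
  | allE {Γ A} (t : Trm) : NND false Γ (.all A) → NND false Γ (A t)
  | exI {Γ A} (t : Trm) : NND true Γ (A t) → NND true Γ (.ex A)
  | exE {Γ A C} : NND false Γ (.ex A) → (∀ t, NND true (A t :: Γ) C) → NND false Γ C

/-- There is a normal-form derivation `Γ ⊢ r : A`. -/
def NfD {Atm Trm : Type} (Γ : List (Fml Atm Trm)) (A : Fml Atm Trm) : Prop :=
  NND true Γ A

/-- There is a neutral derivation `Γ ⊢ e : A`. -/
def NeD {Atm Trm : Type} (Γ : List (Fml Atm Trm)) (A : Fml Atm Trm) : Prop :=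
  NND false Γ A

theorem NND.weaken {Atm Trm : Type} {b : Bool} {Γ Γ' : List (Fml Atm Trm)}
    {A : Fml Atm Trm} (d : NND b Γ A) (h : Γ ⊆ Γ') : NND b Γ' A := by
  induction d generalizing Γ' with
  | ne _ ih => exact .ne (ih h)
  | ax hm => exact .ax (h hm)
  | andI _ _ ih1 ih2 => exact .andI (ih1 h) (ih2 h)
  | andE1 _ ih => exact .andE1 (ih h)
  | andE2 _ ih => exact .andE2 (ih h)
  | orI1 _ ih => exact .orI1 (ih h)
  | orI2 _ ih => exact .orI2 (ih h)
  | orE _ _ _ ih ih1 ih2 =>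
      exact .orE (ih h) (ih1 (List.cons_subset_cons _ h)) (ih2 (List.cons_subset_cons _ h))
  | impI _ ih => exact .impI (ih (List.cons_subset_cons _ h))
  | impE _ _ ih1 ih2 => exact .impE (ih1 h) (ih2 h)
  | allI _ ih => exact .allI fun t => ih t h
  | allE t _ ih => exact .allE t (ih h)
  | exI t _ ih => exact .exI t (ih h)
  | exE _ _ ih ih2 => exact .exE (ih h) fun t => ih2 t (List.cons_subset_cons _ h)

/-- The universal IK-CPS model: worlds are contexts of MQC ordered by
inclusion, strong forcing of an atom and the exploding relation are given by
normal-form derivability, and the domain of quantification is constant. -/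
def univModel (Atm Trm : Type) : IKCPS Atm Trm where
  W := List (Fml Atm Trm)
  le Γ Γ' := Γ ⊆ Γ'
  le_refl _ := List.Subset.refl _
  le_trans h1 h2 := List.Subset.trans h1 h2
  explode Γ C := NfD Γ C
  satom Γ X := NfD Γ (.atom X)
  satom_mono h d := d.weaken h
  Dom _ := Set.univ
  Dom_mono _ := le_rfl

/-!
Normalization by evaluation. In the universal model, where exploding at `Γ` means deriving
in normal form from `Γ`, every neutral derivation of `A` reflects to forcing of `A`, and
strong forcing of `A` reifies to a normal derivation of `A` (simultaneously, by induction
on `A`). The axiom rule then makes every context force itself, so the hypothesis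
yields forcing of `A` at `Γ`, which reifies to a normal, hence an ordinary, derivation.
-/

namespace IKCPS

variable {Atm Trm : Type} (M : IKCPS Atm Trm)

theorem fa_of_forall_le {S : M.W → Prop} {w : M.W} (h : ∀ w', M.le w w' → S w') :
    M.fa S w :=
  fun _ w' hw k => k w' (M.le_refl w') (h w' hw)

theorem explode_of_fa {S : M.W → Prop} {w : M.W} {C : Fml Atm Trm} (f : M.fa S w)
    (k : ∀ w', M.le w w' → S w' → M.explode w' C) : M.explode w C :=
  f C w (M.le_refl w) k

end IKCPS

theorem NND.toDeriv {Atm Trm : Type} {b : Bool} {Γ : List (Fml Atm Trm)} {A : Fml Atm Trm}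
    (d : NND b Γ A) : Deriv Γ A := by
  induction d with
  | ne _ ih => exact ih
  | ax hm => exact .ax hm
  | andI _ _ ih₁ ih₂ => exact .andI ih₁ ih₂
  | andE1 _ ih => exact .andE1 ih
  | andE2 _ ih => exact .andE2 ih
  | orI1 _ ih => exact .orI1 ih
  | orI2 _ ih => exact .orI2 ih
  | orE _ _ _ ih ih₁ ih₂ => exact .orE ih ih₁ ih₂
  | impI _ ih => exact .impI ih
  | impE _ _ ih₁ ih₂ => exact .impE ih₁ ih₂
  | allI _ ih => exact .allI ih
  | allE t _ ih => exact .allE t ih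
  | exI t _ ih => exact .exI t ih
  | exE _ _ ih ih₂ => exact .exE ih ih₂

namespace univModel

variable {Atm Trm : Type}

local notation "U" => univModel Atm Trm

theorem nfD_of_forces_of_sforces {A : Fml Atm Trm} {Γ : List (Fml Atm Trm)}
    (hA : ∀ Δ, (U).sforces A Δ → NfD Δ A) (f : (U).forces A Γ) : NfD Γ A :=
  (U).explode_of_fa f fun Δ _ s => hA Δ s

/-- The disjunction and existential cases of reflection are where exploding as normal
derivability is needed: the continuation is run in the extended context and the case
analysis `orE` / `exE` is put around its result. -/
theorem forces_of_neD_and_nfD_of_sforces (A : Fml Atm Trm) :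
    (∀ Γ, NeD Γ A → (U).forces A Γ) ∧ (∀ Γ, (U).sforces A Γ → NfD Γ A) := by
  induction A with
  | atom X =>
    exact ⟨fun _ e => (U).fa_of_forall_le fun _ sub => .ne (e.weaken sub), fun _ s => s⟩
  | and A B ihA ihB =>
    refine ⟨fun _ e => (U).fa_of_forall_le fun Γ' sub => ?_, fun _ ⟨fA, fB⟩ => ?_⟩
    · exact ⟨ihA.1 Γ' (.andE1 (e.weaken sub)), ihB.1 Γ' (.andE2 (e.weaken sub))⟩
    · exact .andI (nfD_of_forces_of_sforces ihA.2 fA) (nfD_of_forces_of_sforces ihB.2 fB)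
  | or A B ihA ihB =>
    refine ⟨fun _ e C Γ' sub k => .ne (.orE (e.weaken sub) ?_ ?_), fun _ s => ?_⟩
    · exact k (A :: Γ') (List.subset_cons_self _ _) (.inl (ihA.1 _ (.ax List.mem_cons_self)))
    · exact k (B :: Γ') (List.subset_cons_self _ _) (.inr (ihB.1 _ (.ax List.mem_cons_self)))
    · rcases s with fA | fB
      · exact .orI1 (nfD_of_forces_of_sforces ihA.2 fA)
      · exact .orI2 (nfD_of_forces_of_sforces ihB.2 fB)
  | imp A B ihA ihB =>
    refine ⟨fun _ e => (U).fa_of_forall_le fun Γ' sub Γ'' sub' fA => ?_, fun Γ s => ?_⟩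
    · have rA := nfD_of_forces_of_sforces ihA.2 fA
      exact ihB.1 Γ'' (.impE (e.weaken ((U).le_trans sub sub')) rA)
    · have fB := s (A :: Γ) (List.subset_cons_self _ _) (ihA.1 _ (.ax List.mem_cons_self))
      exact .impI (nfD_of_forces_of_sforces ihB.2 fB)
  | all A ih =>
    refine ⟨fun _ e => (U).fa_of_forall_le fun Γ' sub Γ'' sub' t _ => ?_, fun Γ s => ?_⟩
    · exact (ih t).1 Γ'' (.allE t (e.weaken ((U).le_trans sub sub')))
    · exact .allI fun t => nfD_of_forces_of_sforces (ih t).2 (s Γ ((U).le_refl Γ) t trivial)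
  | ex A ih =>
    refine ⟨fun _ e C Γ' sub k => .ne (.exE (e.weaken sub) fun t => ?_),
      fun _ ⟨t, _, f⟩ => ?_⟩
    · exact k (A t :: Γ') (List.subset_cons_self _ _)
        ⟨t, trivial, (ih t).1 _ (.ax List.mem_cons_self)⟩
    · exact .exI t (nfD_of_forces_of_sforces (ih t).2 f)

theorem forces_of_neD {A : Fml Atm Trm} {Γ : List (Fml Atm Trm)} (e : NeD Γ A) :
    (U).forces A Γ :=
  (forces_of_neD_and_nfD_of_sforces A).1 Γ e

theorem nfD_of_forces {A : Fml Atm Trm} {Γ : List (Fml Atm Trm)} (f : (U).forces A Γ) :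
    NfD Γ A :=
  nfD_of_forces_of_sforces (forces_of_neD_and_nfD_of_sforces A).2 f

end univModel

/-- Completeness of MQC with respect to IK-CPS models (usual
formulation): if forcing of `Γ` entails forcing of `A` in every model at every
world, then there is a proof term `p` with `Γ ⊢ p : A`. -/
theorem completeness {Atm Trm : Type} (Γ : List (Fml Atm Trm)) (A : Fml Atm Trm)
    (h : ∀ (M : IKCPS Atm Trm) (w : M.W), (∀ B ∈ Γ, M.forces B w) → M.forces A w) :
    Deriv Γ A := by
  have hΓ : ∀ B ∈ Γ, (univModel Atm Trm).forces B Γ :=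
    fun _ hB => univModel.forces_of_neD (.ax hB)
  exact NND.toDeriv (univModel.nfD_of_forces (h (univModel Atm Trm) Γ hΓ))
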